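/- arXiv:1410.3606 — 4 statements merged into one kernel-verified Lean document; each statement's English description precedes it below -/
import Mathlib

section
/- Let 𝒳 be a full additive subcategory of an abelian category 𝒜. A cochain complex S of objects of 𝒜 is 𝒳-acyclic (i.e. Hom_𝒜(X, S) is acyclic for every X ∈ 𝒳) if and only if Hom_𝒜(D, S) is acyclic for every bounded-above complex D with all components in 𝒳. -/
open CategoryTheory Limits CochainComplex.HomComplex

universe w v u

variable {A : Type u} [Category.{v} A] [Abelian A]

/-- The complex of abelian groups `Hom_𝒜(X, S)` for an object `X` and a cochain complex `S`. -/
noncomputable def homCx (X : A) (S : CochainComplex A ℤ) : CochainComplex AddCommGrpCat ℤ :=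
  ((preadditiveCoyoneda.obj (Opposite.op X)).mapHomologicalComplex (ComplexShape.up ℤ)).obj S

/-- A complex `S` is `𝒳`-acyclic if `Hom_𝒜(X, S)` is acyclic for every `X ∈ 𝒳`. -/
def XAcyclic (𝒳 : Set A) (S : CochainComplex A ℤ) : Prop :=
  ∀ X ∈ 𝒳, ∀ n : ℤ, (homCx X S).ExactAt n

/-- A chain map `f` is an `𝒳`-quasi-isomorphism if `Hom_𝒜(X, f)` is a quasi-isomorphism
for every `X ∈ 𝒳`. -/
def XQuasiIso (𝒳 : Set A) {S T : CochainComplex A ℤ} (f : S ⟶ T) : Prop :=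
  ∀ X ∈ 𝒳, QuasiIso (((preadditiveCoyoneda.obj (Opposite.op X)).mapHomologicalComplex
    (ComplexShape.up ℤ)).map f)

/-!
Since `D` vanishes above degree `n`, a primitive `y` of a cocycle `z ∈ Hom(D, S)^m` can be built
by descending induction on the degree: once `y^(p+1)` satisfies the primitive equation in degree
`p + 1`, the cocycle condition on `z` shows that `z^p - (-1)^m d_D ≫ y^(p+1)` is a cocycle of
`Hom(D^p, S)`, and `𝒳`-acyclicity of `S` provides `y^p` lifting it. Conversely, a cocycle
`X ⟶ S^j` is a cocycle of degree `j` on the complex `X` concentrated in degree `0`, which is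
bounded above with components in `𝒳`.
-/

namespace CochainComplex.HomComplex

lemma homCx_exactAt_iff (X : A) (S : CochainComplex A ℤ) (j : ℤ) :
    (homCx X S).ExactAt j ↔ ∀ w : X ⟶ S.X j, w ≫ S.d j (j + 1) = 0 →
      ∃ c : X ⟶ S.X (j - 1), c ≫ S.d (j - 1) j = w := by
  rw [HomologicalComplex.exactAt_iff' _ (j - 1) j (j + 1) (by simp) (by simp),
    ShortComplex.ab_exact_iff]
  rfl

lemma exists_comp_d_eq_of_exactAt {X : A} {S : CochainComplex A ℤ} {i j k : ℤ}
    (hS : (homCx X S).ExactAt j) (hij : i + 1 = j) (hjk : j + 1 = k) (w : X ⟶ S.X j)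
    (hw : w ≫ S.d j k = 0) : ∃ c : X ⟶ S.X i, c ≫ S.d i j = w := by
  obtain rfl : i = j - 1 := by omega
  subst hjk
  exact (homCx_exactAt_iff X S j).1 hS w hw

variable {D S : CochainComplex A ℤ}

open Classical in
noncomputable def dPreimage {X : A} {j : ℤ} (w : X ⟶ S.X j) (i : ℤ) : X ⟶ S.X i :=
  if h : ∃ c : X ⟶ S.X i, c ≫ S.d i j = w then h.choose else 0

lemma dPreimage_comp_d {X : A} {i j : ℤ} {w : X ⟶ S.X j}
    (h : ∃ c : X ⟶ S.X i, c ≫ S.d i j = w) : dPreimage w i ≫ S.d i j = w := by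
  rw [dPreimage, dif_pos h]
  exact h.choose_spec

namespace Cochain

noncomputable def downwardPrimitive (n : ℤ) {m : ℤ} (z : Cochain D S m) (p q : ℤ) :
    D.X p ⟶ S.X q :=
  if n < p then 0 else
    dPreimage (z.v p (p + m) rfl -
      m.negOnePow • (D.d p (p + 1) ≫ downwardPrimitive n z (p + 1) (p + m))) q
termination_by (n + 1 - p).toNat

lemma downwardPrimitive_of_le (n : ℤ) {m : ℤ} (z : Cochain D S m) {p : ℤ} (hp : p ≤ n) (q : ℤ) :
    downwardPrimitive n z p q = dPreimage (z.v p (p + m) rfl -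
      m.negOnePow • (D.d p (p + 1) ≫ downwardPrimitive n z (p + 1) (p + m))) q := by
  rw [downwardPrimitive, if_neg (not_lt.2 hp)]

lemma downwardPrimitive_spec (n : ℤ) (hD : ∀ i, n < i → IsZero (D.X i))
    (hS : ∀ p j, (homCx (D.X p) S).ExactAt j) {m : ℤ} (z : Cochain D S m)
    (hz : δ m (m + 1) z = 0) (p q r : ℤ) (hpq : p + (m - 1) = q) (hqr : q + 1 = r) :
    downwardPrimitive n z p q ≫ S.d q r +
      m.negOnePow • (D.d p (p + 1) ≫ downwardPrimitive n z (p + 1) r) =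
      z.v p r (by omega) := by
  rcases lt_or_ge n p with hp | hp
  · exact (hD p hp).eq_of_src _ _
  obtain rfl : r = p + m := by omega
  have ih := downwardPrimitive_spec n hD hS z hz (p + 1) (p + m) (p + m + 1) (by omega) rfl
  have hzp := Cochain.congr_v hz p (p + m + 1) (by omega)
  rw [δ_v m (m + 1) rfl z p (p + m + 1) (by omega) (p + m) (p + 1) (by omega) rfl,
    Cochain.zero_v, Int.negOnePow_succ] at hzp
  have hw : (z.v p (p + m) rfl -
      m.negOnePow • (D.d p (p + 1) ≫ downwardPrimitive n z (p + 1) (p + m))) ≫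
      S.d (p + m) (p + m + 1) = 0 := by
    rw [Preadditive.sub_comp, Linear.units_smul_comp, Category.assoc, eq_sub_of_add_eq ih]
    simp only [Preadditive.comp_sub, Linear.comp_units_smul,
      HomologicalComplex.d_comp_d_assoc, zero_comp, smul_zero, sub_zero]
    rwa [Units.neg_smul, ← sub_eq_add_neg] at hzp
  rw [downwardPrimitive_of_le n z hp, dPreimage_comp_d
    (exists_comp_d_eq_of_exactAt (hS p (p + m)) hqr rfl _ hw), sub_add_cancel]
termination_by (n + 1 - p).toNat

theorem exists_δ_eq_of_isZero_of_exactAt (n : ℤ) (hD : ∀ i, n < i → IsZero (D.X i))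
    (hS : ∀ p j, (homCx (D.X p) S).ExactAt j) {m : ℤ} (z : Cochain D S m)
    (hz : δ m (m + 1) z = 0) : ∃ y : Cochain D S (m - 1), δ (m - 1) m y = z := by
  refine ⟨Cochain.mk fun p q _ => downwardPrimitive n z p q, ?_⟩
  ext p r hpr
  rw [δ_v (m - 1) m (by omega) _ p r hpr (r - 1) (p + 1) rfl rfl]
  exact downwardPrimitive_spec n hD hS z hz p (r - 1) r (by omega) (by omega)

end Cochain

lemma homCx_exactAt_of_single {X : A} {j : ℤ}
    (h : ∀ z : Cochain ((singleFunctor A 0).obj X) S j, δ j (j + 1) z = 0 →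
      ∃ y : Cochain ((singleFunctor A 0).obj X) S (j - 1), δ (j - 1) j y = z) :
    (homCx X S).ExactAt j := by
  rw [homCx_exactAt_iff]
  intro w hw
  obtain ⟨y, hy⟩ := h (Cochain.fromSingleMk w (zero_add j))
    (by rw [Cochain.δ_fromSingleMk w _ (j + 1) (j + 1) (zero_add _), hw, Cochain.fromSingleMk_zero])
  obtain ⟨c, rfl⟩ := Cochain.fromSingleMk_surjective y (j - 1) (zero_add _)
  rw [Cochain.δ_fromSingleMk c _ j j (zero_add j)] at hy
  exact ⟨c, (Cochain.fromSingleEquiv (zero_add j)).symm.injective hy⟩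

end CochainComplex.HomComplex

/-- Fact 3.2 (first part): a complex `S` is `𝒳`-acyclic iff `Hom_𝒜(D, S)` is acyclic for
every bounded-above complex `D` with components in `𝒳`. The Hom complex `Hom_𝒜(D, S)` is
acyclic iff every cocycle in it is a coboundary, which is expressed using the cochains
`Cochain D S m` and the differential `δ`. -/
theorem stmt_0 (𝒳 : Set A) (hzero : ∀ Z : A, IsZero Z → Z ∈ 𝒳) (S : CochainComplex A ℤ) :
    XAcyclic 𝒳 S ↔
      ∀ (D : CochainComplex A ℤ) (n : ℤ), (∀ i : ℤ, i ≤ n → D.X i ∈ 𝒳) →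
        (∀ i : ℤ, n < i → IsZero (D.X i)) →
        ∀ (m : ℤ) (z : Cochain D S m), δ m (m + 1) z = 0 →
          ∃ y : Cochain D S (m - 1), δ (m - 1) m y = z := by
  constructor
  · intro hS D n hle hgt
    refine fun m z hz ↦ Cochain.exists_δ_eq_of_isZero_of_exactAt n hgt (fun p j ↦ hS _ ?_ j) z hz
    rcases le_or_gt p n with hp | hp
    exacts [hle p hp, hzero _ (hgt p hp)]
  · intro h X hX j
    refine homCx_exactAt_of_single (h _ 0 (fun i _ ↦ ?_) (fun i hi ↦ ?_) j)
    · rcases eq_or_ne i 0 with rfl | hi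
      · exact (HomologicalComplex.single_obj_X_self (.up ℤ) 0 X).symm ▸ hX
      · exact hzero _ (HomologicalComplex.isZero_single_obj_X _ _ _ _ hi)
    · exact HomologicalComplex.isZero_single_obj_X _ _ _ _ (by omega)
end

section
/- Rickard's criterion: a full triangulated subcategory 𝒞 of a triangulated category 𝒟 is thick (in the sense that whenever a morphism f : X → Y factors through an object of 𝒞 and fits into a distinguished triangle X → Y → Z → X[1] with Z ∈ 𝒞, then X and Y lie in 𝒞) if and only if 𝒞 is closed under direct summands of its objects. -/
/-!
If `C` is closed under summands and `f = a ≫ b : X ⟶ Y` factors through `W ∈ C` in a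
distinguished triangle `X ⟶ Y ⟶ Z ⟶ X⟦1⟧` with `Z ∈ C`, complete `b ≫ g : W ⟶ Z` to a
distinguished triangle `W ⟶ Z ⟶ P ⟶ W⟦1⟧`, so `P ∈ C`. The morphism of triangles extending
`(b, 𝟙 Z)` to the rotated triangle `Y ⟶ Z ⟶ X⟦1⟧ ⟶ Y⟦1⟧` gives `σ : P ⟶ X⟦1⟧`, and because
`f⟦1⟧'` factors through `a⟦1⟧'`, `σ` admits a section. Hence `X⟦1⟧` is a summand of `P`, so
`X ∈ C`, and then `Y ∈ C` as a cone. Conversely, `X ⊞ Y` sits in the triangle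
`Y⟦-1⟧ ⟶ X ⟶ X ⊞ Y ⟶ Y` whose first morphism is zero, hence factors through `X ⊞ Y`.
-/

open CategoryTheory Limits Pretriangulated

universe v u

namespace CategoryTheory

section

variable {D : Type u} [Category.{v} D] [HasShift D ℤ]

lemma mem_of_shift_mem (C : Set D) (hiso : ∀ {X Y : D}, (X ≅ Y) → X ∈ C → Y ∈ C)
    (hshift : ∀ X ∈ C, ∀ n : ℤ, X⟦n⟧ ∈ C) {X : D} (n : ℤ) (hX : X⟦n⟧ ∈ C) : X ∈ C :=
  hiso ((shiftEquiv D n).unitIso.app X).symm (hshift _ hX (-n))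

end

section

variable {D : Type u} [Category.{v} D] [Preadditive D] [HasZeroObject D] [HasShift D ℤ]
  [∀ n : ℤ, (shiftFunctor D n).Additive] [Pretriangulated D]

lemma Pretriangulated.invRotate_binaryBiproductTriangle_mor₁ (X Y : D) :
    (binaryBiproductTriangle X Y).invRotate.mor₁ = 0 := by
  change -((shiftFunctor D (-1)).map (0 : Y ⟶ X⟦(1 : ℤ)⟧) ≫
    (shiftFunctorCompIsoId D (1 : ℤ) (-1) (by omega)).hom.app X) = 0
  rw [Functor.map_zero, zero_comp, neg_zero]

lemma Retract.exists_iso_biprod {A P : D} (r : Retract A P) :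
    ∃ Q : D, Nonempty (P ≅ A ⊞ Q) := by
  obtain ⟨Q, p, δ, hT⟩ := distinguished_cocone_triangle r.i
  obtain ⟨e, -, -⟩ := exists_iso_binaryBiproduct_of_distTriang _ hT
    (Triangle.mor₃_eq_zero_of_mono₁ _ hT (inferInstanceAs (Mono r.i)))
  exact ⟨Q, ⟨e⟩⟩

lemma Pretriangulated.exists_section_of_comp_mor₃ {A B E P : D} {u : A ⟶ B} {v : B ⟶ E}
    {w : E ⟶ A⟦(1 : ℤ)⟧} (hT : Triangle.mk u v w ∈ distTriang D)
    (i : B ⟶ P) (σ : P ⟶ E) (hi : i ≫ σ = v) (t : E ⟶ P) (ht : t ≫ σ ≫ w = w) :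
    ∃ s : E ⟶ P, s ≫ σ = 𝟙 E := by
  obtain ⟨c, hc⟩ := Triangle.coyoneda_exact₃ _ hT (t ≫ σ - 𝟙 E) (by
    change (t ≫ σ - 𝟙 E) ≫ w = 0
    rw [Preadditive.sub_comp, Category.assoc, ht, Category.id_comp, sub_self])
  change E ⟶ B at c
  replace hc : t ≫ σ - 𝟙 E = c ≫ v := hc
  refine ⟨t - c ≫ i, ?_⟩
  rw [Preadditive.sub_comp, Category.assoc, hi, ← hc, sub_sub_cancel]

lemma Pretriangulated.nonempty_retract_shift_of_factors {X Y Z W P : D} {f : X ⟶ Y} {g : Y ⟶ Z}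
    {h : Z ⟶ X⟦(1 : ℤ)⟧} (hT : Triangle.mk f g h ∈ distTriang D) (a : X ⟶ W) (b : W ⟶ Y)
    (hf : f = a ≫ b) {i : Z ⟶ P} {j : P ⟶ W⟦(1 : ℤ)⟧}
    (hS : Triangle.mk (b ≫ g) i j ∈ distTriang D) :
    Nonempty (Retract (X⟦(1 : ℤ)⟧) P) := by
  have hT' : Triangle.mk g h (-f⟦(1 : ℤ)⟧') ∈ distTriang D := rot_of_distTriang _ hT
  have hS' : Triangle.mk i j (-(b ≫ g)⟦(1 : ℤ)⟧') ∈ distTriang D := rot_of_distTriang _ hS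
  obtain ⟨σ, hiσ, hjσ⟩ := complete_distinguished_triangle_morphism _ _ hS hT' b (𝟙 Z)
    (Category.comp_id _)
  change P ⟶ X⟦(1 : ℤ)⟧ at σ
  replace hiσ : i ≫ σ = 𝟙 Z ≫ h := hiσ
  rw [Category.id_comp] at hiσ
  replace hjσ : j ≫ b⟦(1 : ℤ)⟧' = σ ≫ (-f⟦(1 : ℤ)⟧') := hjσ
  -- `t ≫ j = -a⟦1⟧'` gives `t ≫ σ ≫ (-f⟦1⟧') = t ≫ j ≫ b⟦1⟧' = -f⟦1⟧'`
  obtain ⟨t, ht⟩ := Triangle.coyoneda_exact₃ _ hS' (-(a⟦(1 : ℤ)⟧')) (by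
    have hag : a ≫ b ≫ g = 0 := by
      rw [← Category.assoc, ← hf]; exact comp_distTriang_mor_zero₁₂ _ hT
    change (-(a⟦(1 : ℤ)⟧')) ≫ (-(b ≫ g)⟦(1 : ℤ)⟧') = 0
    rw [Preadditive.neg_comp_neg, ← Functor.map_comp, hag, Functor.map_zero])
  change X⟦(1 : ℤ)⟧ ⟶ P at t
  replace ht : -(a⟦(1 : ℤ)⟧') = t ≫ j := ht
  obtain ⟨s, hs⟩ := exists_section_of_comp_mor₃ hT' i σ hiσ t (by
    rw [← hjσ, ← Category.assoc, ← ht, hf]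
    simp)
  exact ⟨⟨s, σ, hs⟩⟩

lemma mem_of_retract (C : Set D) (hiso : ∀ {X Y : D}, (X ≅ Y) → X ∈ C → Y ∈ C)
    (hsum : ∀ X Y : D, (X ⊞ Y) ∈ C → X ∈ C) {A P : D} (r : Retract A P) (hP : P ∈ C) :
    A ∈ C := by
  obtain ⟨Q, ⟨e⟩⟩ := r.exists_iso_biprod
  exact hsum A Q (hiso e hP)

end

end CategoryTheory

variable {D : Type u} [Category.{v} D] [Preadditive D] [HasZeroObject D] [HasShift D ℤ]
  [∀ n : ℤ, (CategoryTheory.shiftFunctor D n).Additive] [Pretriangulated D]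
  [HasBinaryBiproducts D]

/-- Rickard's criterion: a full triangulated subcategory `𝒞` of a triangulated category `D`
(closed under isomorphisms, shifts and cones) is thick — in the sense that whenever a
morphism `f : X ⟶ Y` factors through an object of `𝒞` and fits into a distinguished triangle
`X ⟶ Y ⟶ Z ⟶ X⟦1⟧` with `Z ∈ 𝒞`, then both `X` and `Y` lie in `𝒞` — if and only if `𝒞` is
closed under direct summands. -/
theorem stmt_3 (C : Set D)
    (hiso : ∀ {X Y : D}, (X ≅ Y) → X ∈ C → Y ∈ C)
    (hshift : ∀ X ∈ C, ∀ n : ℤ, X⟦n⟧ ∈ C)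
    (hcone : ∀ T : Triangle D, T ∈ (distTriang D) → T.obj₁ ∈ C → T.obj₂ ∈ C → T.obj₃ ∈ C) :
    (∀ (X Y Z : D) (f : X ⟶ Y),
        (∃ W ∈ C, ∃ (a : X ⟶ W) (b : W ⟶ Y), f = a ≫ b) →
        ∀ (g : Y ⟶ Z) (h : Z ⟶ X⟦(1 : ℤ)⟧),
          Triangle.mk f g h ∈ (distTriang D) → Z ∈ C → X ∈ C ∧ Y ∈ C) ↔
      (∀ X Y : D, (X ⊞ Y) ∈ C → X ∈ C) := by
  constructor
  · intro hthick X Y hXY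
    have hzero : (binaryBiproductTriangle X Y).invRotate.mor₁ = (0 : _ ⟶ X ⊞ Y) ≫ 0 :=
      (invRotate_binaryBiproductTriangle_mor₁ X Y).trans zero_comp.symm
    exact (hthick _ _ _ _ ⟨X ⊞ Y, hXY, 0, 0, hzero⟩ _ _
      (inv_rot_of_distTriang _ (binaryBiproductTriangle_distinguished X Y)) hXY).2
  · rintro hsum X Y Z f ⟨W, hW, a, b, hf⟩ g h hT hZ
    obtain ⟨P, i, j, hS⟩ := distinguished_cocone_triangle (b ≫ g)
    obtain ⟨r⟩ := nonempty_retract_shift_of_factors hT a b hf hS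
    have hX : X ∈ C :=
      mem_of_shift_mem C hiso hshift 1 (mem_of_retract C hiso hsum r (hcone _ hS hW hZ))
    exact ⟨hX, hcone _ (inv_rot_of_distTriang _ hT) (hshift Z hZ (-1)) hX⟩
end

section
/- Let 𝒳 be a full additive subcategory of an abelian category 𝒜, let S be a complex, D a bounded-above complex with components in 𝒳, and f : S → D an 𝒳-quasi-isomorphism. Then there exists a chain map g : D → S such that f ∘ g is chain homotopic to the identity of D. -/
/-!
Since `Hom(X, -)` commutes with mapping cones, `Hom(X, cone f)` is acyclic for every `X ∈ 𝒳`.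
As `D` is bounded above with components in `𝒳`, a null-homotopy of `inr f : D ⟶ cone f` can
then be built degree by degree, starting from the top and lifting along the differential of
`cone f` at each step. Finally, `S ⟶ D ⟶ cone f ⟶ S⟦1⟧` is distinguished in the homotopy
category, so `inr f = 0` there forces `𝟙 D` to factor through `f`.
-/

open CategoryTheory Limits CochainComplex.HomComplex

universe w v u

variable {A : Type u} [Category.{v} A] [Abelian A]

open CochainComplex

lemma exists_comp_d_eq_of_exactAt {X : A} {C : CochainComplex A ℤ} {i j k : ℤ}
    (hij : i + 1 = j) (hjk : j + 1 = k) (h : (homCx X C).ExactAt j)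
    (v : X ⟶ C.X j) (hv : v ≫ C.d j k = 0) :
    ∃ φ : X ⟶ C.X i, φ ≫ C.d i j = v := by
  rw [HomologicalComplex.exactAt_iff' _ i j k (by simp; omega) (by simpa using hjk),
    ShortComplex.ab_exact_iff] at h
  exact h v hv

section NullHomotopy

variable {C D : CochainComplex A ℤ} {n : ℤ} (hD : ∀ i, n < i → IsZero (D.X i))
  (hC : ∀ i ≤ n, (homCx (D.X i) C).ExactAt i)

noncomputable def nullHomotopyData (u : D ⟶ C) (k : ℤ) :
    Σ' (h : D.X (k + 1) ⟶ C.X k) (h' : D.X (k + 1 + 1) ⟶ C.X (k + 1)),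
      h ≫ C.d k (k + 1) + D.d (k + 1) (k + 1 + 1) ≫ h' = u.f (k + 1) :=
  if hk : n ≤ k then
    ⟨0, 0, by simp [(hD (k + 1) (by omega)).eq_of_src (u.f _) 0]⟩
  else
    let h' := (nullHomotopyData u (k + 1)).1
    have hv : (u.f (k + 1) - D.d (k + 1) (k + 1 + 1) ≫ h') ≫ C.d (k + 1) (k + 1 + 1) = 0 := by
      have eq := (nullHomotopyData u (k + 1)).2.2
      rw [Preadditive.sub_comp, Category.assoc, eq_sub_of_add_eq eq, Preadditive.comp_sub,
        D.d_comp_d_assoc, zero_comp, sub_zero, u.comm, sub_self]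
    have hφ := exists_comp_d_eq_of_exactAt rfl rfl (hC (k + 1) (by omega)) _ hv
    ⟨hφ.choose, h', by rw [hφ.choose_spec, sub_add_cancel]⟩
termination_by (n - k).toNat

lemma nullHomotopyData_snd (u : D ⟶ C) (k : ℤ) :
    (nullHomotopyData hD hC u k).2.1 = (nullHomotopyData hD hC u (k + 1)).1 := by
  by_cases hk : n ≤ k
  · rw [nullHomotopyData, dif_pos hk, nullHomotopyData, dif_pos (by omega)]
  · rw [nullHomotopyData, dif_neg hk]

include hD hC in
lemma nonempty_homotopy_zero_of_exactAt_homCx (u : D ⟶ C) : Nonempty (Homotopy u 0) := by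
  let z : Cochain D C (-1) := Cochain.mk fun p q hpq =>
    (D.XIsoOfEq (by omega : p = q + 1)).hom ≫ (nullHomotopyData hD hC u q).1
  refine ⟨(Cochain.equivHomotopy u 0).symm ⟨z, ?_⟩⟩
  rw [Cochain.ofHom_zero, add_zero]
  ext p
  obtain ⟨k, rfl⟩ : ∃ k, p = k + 1 := ⟨p - 1, by omega⟩
  rw [δ_v (-1) 0 (neg_add_cancel 1) z (k + 1) (k + 1) (add_zero _) k (k + 1 + 1) (by omega) rfl]
  simp [z, Cochain.mk_v, ← nullHomotopyData_snd, (nullHomotopyData hD hC u k).2.2]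

end NullHomotopy

lemma exactAt_mappingCone_of_quasiIso {B : Type*} [Category B] [Abelian B]
    {K L : CochainComplex B ℤ} (φ : K ⟶ L) [QuasiIso φ] (m : ℤ) :
    (mappingCone φ).ExactAt m := by
  have hW : ObjectProperty.trW (HomotopyCategory.subcategoryAcyclic B)
      ((HomotopyCategory.quotient _ _).map φ) := by
    rw [← HomotopyCategory.quasiIso_eq_trW_subcategoryAcyclic,
      HomotopyCategory.quotient_map_mem_quasiIso_iff, HomologicalComplex.mem_quasiIso_iff]
    infer_instance
  have hCone := (ObjectProperty.trW_iff_of_distinguished _ _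
    (HomotopyCategory.mappingCone_triangleh_distinguished φ)).1 hW
  exact (HomotopyCategory.quotient_obj_mem_subcategoryAcyclic_iff_exactAt _).1 hCone m

lemma exactAt_homCx_mappingCone_of_XQuasiIso {𝒳 : Set A} {S D : CochainComplex A ℤ}
    {f : S ⟶ D} (hf : XQuasiIso 𝒳 f) {X : A} (hX : X ∈ 𝒳) (m : ℤ) :
    (homCx X (mappingCone f)).ExactAt m := by
  have := hf X hX
  exact (exactAt_mappingCone_of_quasiIso _ m).of_iso
    (mappingCone.mapHomologicalComplexIso f _).symm

lemma exists_homotopy_comp_id_of_homotopy_inr_zero {S D : CochainComplex A ℤ} (f : S ⟶ D)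
    (h : Homotopy (mappingCone.inr f) 0) :
    ∃ g : D ⟶ S, Nonempty (Homotopy (g ≫ f) (𝟙 D)) := by
  have hinr : (HomotopyCategory.quotient _ _).map (mappingCone.inr f) = 0 := by
    rw [HomotopyCategory.eq_of_homotopy _ _ h, Functor.map_zero]
  obtain ⟨g, hg⟩ := Pretriangulated.Triangle.coyoneda_exact₂ _
    (HomotopyCategory.mappingCone_triangleh_distinguished f) (𝟙 _)
    ((Category.id_comp _).trans hinr)
  obtain ⟨g, rfl⟩ := (HomotopyCategory.quotient _ _).map_surjective g
  exact ⟨g, ⟨HomotopyCategory.homotopyOfEq _ _ ((Functor.map_comp _ _ _).trans hg.symm)⟩⟩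

/-- Lemma 3.6: if `f : S ⟶ D` is an `𝒳`-quasi-isomorphism and `D` is a bounded-above complex
with components in `𝒳`, then there is `g : D ⟶ S` with `f ∘ g` homotopic to the identity. -/
theorem stmt_4 (𝒳 : Set A) (S D : CochainComplex A ℤ) (n : ℤ)
    (hD1 : ∀ i : ℤ, i ≤ n → D.X i ∈ 𝒳) (hD2 : ∀ i : ℤ, n < i → IsZero (D.X i))
    (f : S ⟶ D) (hf : XQuasiIso 𝒳 f) :
    ∃ g : D ⟶ S, Nonempty (Homotopy (g ≫ f) (𝟙 D)) := by
  obtain ⟨h⟩ := nonempty_homotopy_zero_of_exactAt_homCx hD2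
    (fun i hi => exactAt_homCx_mappingCone_of_XQuasiIso hf (hD1 i hi) i) (mappingCone.inr f)
  exact exists_homotopy_comp_id_of_homotopy_inr_zero f h
end

section
/- Let 0 → K → M →^g N → 0 be a short exact sequence of complexes over an abelian category 𝒜 such that K = Ker(g) is 𝒳-acyclic and the sequence stays exact after applying Hom_𝒜(X, −) for every X ∈ 𝒳. Then for every bounded-above complex D with components in 𝒳 and every chain map α : D → N, there exists a chain map β : D → M with g ∘ β = α. -/
open CategoryTheory Limits CochainComplex.HomComplex

universe w v u

variable {A : Type u} [Category.{v} A] [Abelian A]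

/-! `β` is built by downward induction on the degree, starting from `0` above `n`. In degree
`j`, lift `α.f j` along `g` to some `γ`; the defect
`D.d j (j + 1) ≫ β.f (j + 1) - γ ≫ M.d j (j + 1)` is killed by `g`, so it comes from a cocycle
of `Hom(D.X j, K)`, which is a coboundary `ε ≫ K.d` because `K` is `𝒳`-acyclic.
Then `γ + ε ≫ i.f j` is the component of `β` in degree `j`. -/

theorem exists_comp_d_eq_of_exactAt_homCx {X : A} {S : CochainComplex A ℤ} {i j k : ℤ}
    (hij : i + 1 = j) (hjk : j + 1 = k) (h : (homCx X S).ExactAt j)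
    (z : X ⟶ S.X j) (hz : z ≫ S.d j k = 0) : ∃ y : X ⟶ S.X i, y ≫ S.d i j = z := by
  rw [HomologicalComplex.exactAt_iff' _ i j k (by simp; omega) (by simp [hjk]),
    ShortComplex.ab_exact_iff] at h
  exact h z hz

theorem exists_lift_comp_d_eq {K M N : CochainComplex A ℤ} {i : K ⟶ M} {g : M ⟶ N}
    (w : i ≫ g = 0)
    (hses : ∀ n : ℤ, (ShortComplex.mk (i.f n) (g.f n)
      (by rw [← HomologicalComplex.comp_f, w]; rfl)).ShortExact)
    {X : A} {j : ℤ} (hK : (homCx X K).ExactAt (j + 1))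
    (hsurj : Function.Surjective (fun h : X ⟶ M.X j => h ≫ g.f j))
    (a : X ⟶ N.X j) (u : X ⟶ M.X (j + 1))
    (hau : a ≫ N.d j (j + 1) = u ≫ g.f (j + 1)) (hu : u ≫ M.d (j + 1) (j + 2) = 0) :
    ∃ f : X ⟶ M.X j, f ≫ g.f j = a ∧ f ≫ M.d j (j + 1) = u := by
  obtain ⟨γ, hγ : γ ≫ g.f j = a⟩ := hsurj a
  set δ := u - γ ≫ M.d j (j + 1) with hδ
  have hδg : δ ≫ g.f (j + 1) = 0 := by
    rw [hδ, Preadditive.sub_comp, Category.assoc, ← g.comm, reassoc_of% hγ, hau, sub_self]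
  have := (hses (j + 1)).mono_f
  obtain ⟨κ, hκ : κ ≫ i.f (j + 1) = δ⟩ := (hses (j + 1)).exact.lift' δ hδg
  have := (hses (j + 2)).mono_f
  have hκd : κ ≫ K.d (j + 1) (j + 2) = 0 := by
    rw [← cancel_mono (i.f (j + 2)), Category.assoc, ← i.comm, reassoc_of% hκ, hδ,
      Preadditive.sub_comp, hu, Category.assoc, M.d_comp_d, comp_zero, sub_zero, zero_comp]
  obtain ⟨ε, hε⟩ := exists_comp_d_eq_of_exactAt_homCx rfl (by ring) hK κ hκd
  have hig : i.f j ≫ g.f j = 0 := by rw [← HomologicalComplex.comp_f, w]; rfl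
  refine ⟨γ + ε ≫ i.f j, ?_, ?_⟩
  · rw [Preadditive.add_comp, hγ, Category.assoc, hig, comp_zero, add_zero]
  · rw [Preadditive.add_comp, Category.assoc, i.comm, reassoc_of% hε, hκ, hδ,
      add_sub_cancel]

namespace CochainComplex

section DownwardInduction

variable {D M : CochainComplex A ℤ} (P : ∀ j, (D.X j ⟶ M.X j) → Prop) (n : ℤ)
  (hzero : ∀ j, n < j → P j 0)
  (hext : ∀ j ≤ n, ∀ v : D.X (j + 1) ⟶ M.X (j + 1), P (j + 1) v →
    D.d j (j + 1) ≫ v ≫ M.d (j + 1) (j + 2) = 0 →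
    ∃ f : D.X j ⟶ M.X j, P j f ∧ f ≫ M.d j (j + 1) = D.d j (j + 1) ≫ v)

/-- The invariant is stated for all `i k` rather than for `j - 1` and `j + 1`, so that the
recursive call at `j + 1` can be used without rewriting indices inside `D.X` and `M.X`. -/
noncomputable def downwardLift (j : ℤ) :
    {f : D.X j ⟶ M.X j // P j f ∧ ∀ i k, D.d i j ≫ f ≫ M.d j k = 0} :=
  if hj : n < j then ⟨0, hzero j hj, by simp⟩
  else
    have hv := (downwardLift (j + 1)).2
    have h := hext j (not_lt.1 hj) _ hv.1 (hv.2 j (j + 2))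
    ⟨h.choose, h.choose_spec.1, fun i k => by
      by_cases hk : j + 1 = k
      · subst hk
        rw [h.choose_spec.2, D.d_comp_d_assoc, zero_comp]
      · rw [M.shape j k hk, comp_zero, comp_zero]⟩
termination_by (n + 1 - j).toNat

theorem downwardLift_comp_d (j : ℤ) :
    (downwardLift P n hzero hext j).1 ≫ M.d j (j + 1) =
      D.d j (j + 1) ≫ (downwardLift P n hzero hext (j + 1)).1 := by
  by_cases hj : n < j
  · rw [downwardLift, dif_pos hj, downwardLift, dif_pos (by omega)]
    simp
  · rw [downwardLift, dif_neg hj]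
    have hv := (downwardLift P n hzero hext (j + 1)).2
    exact (hext j (not_lt.1 hj) _ hv.1 (hv.2 j (j + 2))).choose_spec.2

end DownwardInduction

theorem exists_hom_of_extend_downward {D M : CochainComplex A ℤ}
    (P : ∀ j, (D.X j ⟶ M.X j) → Prop) (n : ℤ) (hzero : ∀ j, n < j → P j 0)
    (hext : ∀ j ≤ n, ∀ v : D.X (j + 1) ⟶ M.X (j + 1), P (j + 1) v →
      D.d j (j + 1) ≫ v ≫ M.d (j + 1) (j + 2) = 0 →
      ∃ f : D.X j ⟶ M.X j, P j f ∧ f ≫ M.d j (j + 1) = D.d j (j + 1) ≫ v) :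
    ∃ β : D ⟶ M, ∀ j, P j (β.f j) :=
  ⟨{ f := fun j => (downwardLift P n hzero hext j).1
     comm' := by
       rintro j _ rfl
       exact downwardLift_comp_d P n hzero hext j },
    fun j => (downwardLift P n hzero hext j).2.1⟩

end CochainComplex

/-- Lemma 3.8: given a degreewise short exact sequence `0 → K → M → N → 0` of complexes with
`K` `𝒳`-acyclic which stays exact after applying `Hom_𝒜(X, −)` for every `X ∈ 𝒳`, every
chain map `α : D ⟶ N` from a bounded-above complex `D` with components in `𝒳` lifts to a
chain map `β : D ⟶ M` with `g ∘ β = α`. -/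
theorem stmt_6 (𝒳 : Set A) (K M N : CochainComplex A ℤ) (i : K ⟶ M) (g : M ⟶ N)
    (w : i ≫ g = 0)
    (hses : ∀ n : ℤ, (ShortComplex.mk (i.f n) (g.f n)
      (by rw [← HomologicalComplex.comp_f, w]; rfl)).ShortExact)
    (hK : XAcyclic 𝒳 K)
    (hsurj : ∀ X ∈ 𝒳, ∀ n : ℤ, Function.Surjective (fun h : X ⟶ M.X n => h ≫ g.f n))
    (D : CochainComplex A ℤ) (n : ℤ)
    (hD1 : ∀ i : ℤ, i ≤ n → D.X i ∈ 𝒳) (hD2 : ∀ i : ℤ, n < i → IsZero (D.X i))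
    (α : D ⟶ N) :
    ∃ β : D ⟶ M, β ≫ g = α := by
  obtain ⟨β, hβ⟩ := CochainComplex.exists_hom_of_extend_downward
    (fun j f => f ≫ g.f j = α.f j) n (fun j hj => (hD2 j hj).eq_of_src _ _)
    (fun j hj v hv hvd => exists_lift_comp_d_eq w hses (hK _ (hD1 j hj) (j + 1))
      (hsurj _ (hD1 j hj) j) (α.f j) (D.d j (j + 1) ≫ v)
      (by rw [α.comm, Category.assoc, hv]) (by rw [Category.assoc, hvd]))
  exact ⟨β, by ext j; exact hβ j⟩
end
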